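/- Maximum probability of conversion under the SU(2)-SSR on ℋ_n̂: Let p, q : ℕ → ℝ be standard-form weight distributions on ℋ_n̂, and suppose there is a unique J₀ ∈ ℕ such that for all j ∈ ℕ, q j ≠ 0 implies p (j + J₀) ≠ 0. Then the set of achievable conversion probabilities { λ : ℝ | there exist downward shifts J : ℕ → ℕ, nonnegative coefficients c : ℕ → ℕ → ℝ with c μ j = 0 whenever j < J μ and ∑' μ, (c μ j)² ≤ 1 for every j ∈ ℕ, and nonnegative weights w : ℕ → ℝ such that (c μ (j + J μ))² · p (j + J μ) = w μ · q j for all μ and j, and λ = ∑' μ, w μ } has a greatest element, equal to the minimum of p (j + J₀) / q j over the (finitely many, and at least one) j with q j ≠ 0. -/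

import Mathlib

/-!
A Kraus branch with shift `J` and nonzero weight forces the support of `q`, shifted up by `J`,
into the support of `p`; by uniqueness its shift is `J₀`. Evaluating the branch equation at a
minimiser `j₀` of `p (j + J₀) / q j` then shows that every branch has weight
`m · c (j₀ + J₀)²` with `m` the minimal ratio, so the total weight is at most `m` by
trace non-increase. Conversely, the single branch `c (j + J₀) = √(m q j / p (j + J₀))` is a
contraction precisely because `m` is the minimal ratio, and it achieves weight `m`.
-/

open Function

/-- Success probabilities of trace-nonincreasing SU(2)-invariant Kraus families from `p` to `q`. -/
def conversionProbabilities (p q : ℕ → ℝ) : Set ℝ :=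
  {lam : ℝ | ∃ (J : ℕ → ℕ) (c : ℕ → ℕ → ℝ) (w : ℕ → ℝ),
    (∀ μ j, 0 ≤ c μ j) ∧ (∀ μ j, j < J μ → c μ j = 0) ∧
    (∀ j, ∑' μ, (c μ j) ^ 2 ≤ 1) ∧ (∀ μ, 0 ≤ w μ) ∧
    (∀ μ j, (c μ (j + J μ)) ^ 2 * p (j + J μ) = w μ * q j) ∧
    lam = ∑' μ, w μ}

section KrausBranch

variable {p q c : ℕ → ℝ} {J J₀ j₀ : ℕ} {w : ℝ}

theorem shift_support_subset_of_weight_ne_zero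
    (heq : ∀ j, c (j + J) ^ 2 * p (j + J) = w * q j) (hw : w ≠ 0) :
    ∀ j, q j ≠ 0 → p (j + J) ≠ 0 := by
  intro j hqj hpj
  have := heq j
  rw [hpj, mul_zero, eq_comm, mul_eq_zero] at this
  exact this.elim hw hqj

theorem coeff_eq_zero_of_weight_eq_zero (hcJ : ∀ j, j < J → c j = 0)
    (heq : ∀ j, c (j + J) ^ 2 * p (j + J) = 0 * q j) {k : ℕ} (hpk : p k ≠ 0) : c k = 0 := by
  rcases lt_or_ge k J with hk | hk
  · exact hcJ k hk
  · have := heq (k - J)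
    rw [Nat.sub_add_cancel hk, zero_mul, mul_eq_zero] at this
    exact pow_eq_zero_iff two_ne_zero |>.mp (this.resolve_right hpk)

/-- A branch of weight zero has `c (j₀ + J₀) = 0` since `p (j₀ + J₀) ≠ 0`; any other branch
has shift `J₀` by uniqueness. -/
theorem weight_eq_ratio_mul_sq (hcJ : ∀ j, j < J → c j = 0)
    (heq : ∀ j, c (j + J) ^ 2 * p (j + J) = w * q j)
    (huniq : ∀ J' : ℕ, (∀ j, q j ≠ 0 → p (j + J') ≠ 0) → J' = J₀)
    (hqj₀ : q j₀ ≠ 0) (hpj₀ : p (j₀ + J₀) ≠ 0) :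
    w = p (j₀ + J₀) / q j₀ * c (j₀ + J₀) ^ 2 := by
  by_cases hw : w = 0
  · subst hw
    rw [coeff_eq_zero_of_weight_eq_zero hcJ heq hpj₀]
    ring
  · obtain rfl := huniq J (shift_support_subset_of_weight_ne_zero heq hw)
    rw [div_mul_eq_mul_div, eq_div_iff hqj₀, mul_comm _ (c _ ^ 2), heq]

end KrausBranch

theorem le_of_mem_conversionProbabilities {p q : ℕ → ℝ} {J₀ j₀ : ℕ} {lam : ℝ}
    (huniq : ∀ J : ℕ, (∀ j, q j ≠ 0 → p (j + J) ≠ 0) → J = J₀)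
    (hqj₀ : q j₀ ≠ 0) (hpj₀ : p (j₀ + J₀) ≠ 0) (hm0 : 0 ≤ p (j₀ + J₀) / q j₀)
    (hlam : lam ∈ conversionProbabilities p q) : lam ≤ p (j₀ + J₀) / q j₀ := by
  obtain ⟨J, c, w, -, hcJ, hcsum, -, heq, rfl⟩ := hlam
  have hw μ := weight_eq_ratio_mul_sq (hcJ μ) (heq μ) huniq hqj₀ hpj₀
  calc ∑' μ, w μ = p (j₀ + J₀) / q j₀ * ∑' μ, c μ (j₀ + J₀) ^ 2 := by
        rw [tsum_congr hw, tsum_mul_left]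
    _ ≤ p (j₀ + J₀) / q j₀ := mul_le_of_le_one_right hm0 (hcsum _)

theorem mem_conversionProbabilities_of_single {p q c : ℕ → ℝ} {J : ℕ} {w : ℝ}
    (hc0 : ∀ j, 0 ≤ c j) (hcJ : ∀ j, j < J → c j = 0) (hc1 : ∀ j, c j ^ 2 ≤ 1) (hw0 : 0 ≤ w)
    (heq : ∀ j, c (j + J) ^ 2 * p (j + J) = w * q j) :
    w ∈ conversionProbabilities p q := by
  have htrace j : ∑' μ : ℕ, (if μ = 0 then c else 0) j ^ 2 ≤ 1 := by
    rw [tsum_eq_single 0 fun μ hμ => by simp [hμ]]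
    exact hc1 j
  refine ⟨fun _ => J, fun μ => if μ = 0 then c else 0, fun μ => if μ = 0 then w else 0,
    fun μ j => ?_, fun μ j hj => ?_, htrace, fun μ => ?_, fun μ j => ?_,
    (tsum_ite_eq 0 fun _ => w).symm⟩ <;> by_cases hμ : μ = 0 <;> simp_all

noncomputable def optimalCoeff (p q : ℕ → ℝ) (J₀ : ℕ) (m : ℝ) (j : ℕ) : ℝ :=
  if j < J₀ then 0 else √(m * q (j - J₀) / p j)

section OptimalCoeff

variable {p q : ℕ → ℝ} {J₀ : ℕ} {m : ℝ}

theorem optimalCoeff_nonneg (j : ℕ) : 0 ≤ optimalCoeff p q J₀ m j := by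
  unfold optimalCoeff
  split_ifs
  exacts [le_rfl, Real.sqrt_nonneg _]

theorem optimalCoeff_of_lt {j : ℕ} (hj : j < J₀) : optimalCoeff p q J₀ m j = 0 :=
  if_pos hj

theorem optimalCoeff_add_sq (hp0 : ∀ j, 0 ≤ p j) (hq0 : ∀ j, 0 ≤ q j) (hm0 : 0 ≤ m) (j : ℕ) :
    optimalCoeff p q J₀ m (j + J₀) ^ 2 = m * q j / p (j + J₀) := by
  rw [optimalCoeff, if_neg (by omega), Nat.add_sub_cancel,
    Real.sq_sqrt (div_nonneg (mul_nonneg hm0 (hq0 _)) (hp0 _))]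

theorem optimalCoeff_sq_mul (hp0 : ∀ j, 0 ≤ p j) (hq0 : ∀ j, 0 ≤ q j) (hm0 : 0 ≤ m)
    (hJ₀ : ∀ j, q j ≠ 0 → p (j + J₀) ≠ 0) (j : ℕ) :
    optimalCoeff p q J₀ m (j + J₀) ^ 2 * p (j + J₀) = m * q j := by
  rw [optimalCoeff_add_sq hp0 hq0 hm0]
  by_cases hq : q j = 0
  · simp [hq]
  · exact div_mul_cancel₀ _ (hJ₀ j hq)

theorem optimalCoeff_sq_le_one (hp0 : ∀ j, 0 ≤ p j) (hq0 : ∀ j, 0 ≤ q j) (hm0 : 0 ≤ m)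
    (hm : ∀ j, q j ≠ 0 → m ≤ p (j + J₀) / q j) (j : ℕ) :
    optimalCoeff p q J₀ m j ^ 2 ≤ 1 := by
  rcases lt_or_ge j J₀ with hj | hj
  · simp [optimalCoeff_of_lt hj]
  obtain ⟨k, rfl⟩ := Nat.exists_eq_add_of_le' hj
  rw [optimalCoeff_add_sq hp0 hq0 hm0]
  by_cases hq : q k = 0
  · simp [hq]
  refine div_le_one_of_le₀ ?_ (hp0 _)
  calc m * q k ≤ p (k + J₀) / q k * q k := mul_le_mul_of_nonneg_right (hm k hq) (hq0 k)
    _ = p (k + J₀) := div_mul_cancel₀ _ hq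

end OptimalCoeff

theorem su2_max_probability_general
    (p q : ℕ → ℝ)
    (hp0 : ∀ j, 0 ≤ p j)
    (hq0 : ∀ j, 0 ≤ q j) (hqfin : (Function.support q).Finite) (hqsum : ∑' j, q j = 1)
    (J₀ : ℕ) (hJ₀ : ∀ j, q j ≠ 0 → p (j + J₀) ≠ 0)
    (huniq : ∀ J : ℕ, (∀ j, q j ≠ 0 → p (j + J) ≠ 0) → J = J₀) :
    ∃ m : ℝ,
      IsLeast {r : ℝ | ∃ j : ℕ, q j ≠ 0 ∧ r = p (j + J₀) / q j} m ∧
      IsGreatest {lam : ℝ | ∃ (J : ℕ → ℕ) (c : ℕ → ℕ → ℝ) (w : ℕ → ℝ),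
        (∀ μ j, 0 ≤ c μ j) ∧ (∀ μ j, j < J μ → c μ j = 0) ∧
        (∀ j, ∑' μ, (c μ j) ^ 2 ≤ 1) ∧ (∀ μ, 0 ≤ w μ) ∧
        (∀ μ j, (c μ (j + J μ)) ^ 2 * p (j + J μ) = w μ * q j) ∧
        lam = ∑' μ, w μ} m := by
  have hq_supp : (support q).Nonempty := support_nonempty_iff.mpr (by rintro rfl; simp at hqsum)
  obtain ⟨j₀, hqj₀, hmin⟩ :=
    Set.exists_min_image (support q) (fun j => p (j + J₀) / q j) hqfin hq_supp
  have hm0 : 0 ≤ p (j₀ + J₀) / q j₀ := div_nonneg (hp0 _) (hq0 _)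
  refine ⟨_, ⟨⟨j₀, hqj₀, rfl⟩, ?_⟩, ?_, ?_⟩
  · rintro _ ⟨j, hqj, rfl⟩
    exact hmin j hqj
  · exact mem_conversionProbabilities_of_single optimalCoeff_nonneg (fun _ => optimalCoeff_of_lt)
      (optimalCoeff_sq_le_one hp0 hq0 hm0 hmin) hm0 (optimalCoeff_sq_mul hp0 hq0 hm0 hJ₀)
  · exact fun _ => le_of_mem_conversionProbabilities huniq hqj₀ (hJ₀ j₀ hqj₀) hm0

/-- **Maximum probability of conversion under the SU(2)-SSR on ℋ_n̂.**
If there is a unique downward shift `J₀` such that the j-spectrum of `q` lies inside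
the j-spectrum of `p` shifted down by `J₀`, then the set of achievable conversion
probabilities (via trace-nonincreasing SU(2)-invariant Kraus families) has a greatest
element, equal to the minimum of `p (j + J₀) / q j` over the `j` with `q j ≠ 0`. -/
theorem su2_max_probability
    (p q : ℕ → ℝ)
    (hp0 : ∀ j, 0 ≤ p j) (hpfin : (Function.support p).Finite) (hpsum : ∑' j, p j = 1)
    (hq0 : ∀ j, 0 ≤ q j) (hqfin : (Function.support q).Finite) (hqsum : ∑' j, q j = 1)
    (J₀ : ℕ) (hJ₀ : ∀ j, q j ≠ 0 → p (j + J₀) ≠ 0)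
    (huniq : ∀ J : ℕ, (∀ j, q j ≠ 0 → p (j + J) ≠ 0) → J = J₀) :
    ∃ m : ℝ,
      IsLeast {r : ℝ | ∃ j : ℕ, q j ≠ 0 ∧ r = p (j + J₀) / q j} m ∧
      IsGreatest {lam : ℝ | ∃ (J : ℕ → ℕ) (c : ℕ → ℕ → ℝ) (w : ℕ → ℝ),
        (∀ μ j, 0 ≤ c μ j) ∧ (∀ μ j, j < J μ → c μ j = 0) ∧
        (∀ j, ∑' μ, (c μ j) ^ 2 ≤ 1) ∧ (∀ μ, 0 ≤ w μ) ∧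
        (∀ μ j, (c μ (j + J μ)) ^ 2 * p (j + J μ) = w μ * q j) ∧
        lam = ∑' μ, w μ} m :=
  su2_max_probability_general p q hp0 hq0 hqfin hqsum J₀ hJ₀ huniq
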